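/- Let $\mathcal{H}$ be a real Hilbert space, $B$ a bounded strictly accretive operator on $\mathcal{H}$ (identified with its complexification) with numerical range angle $\theta_2^*$, $1 < r < 2$, $0 \leq \theta \leq \theta_r$, and $C \in \{e^{i\theta}B, e^{-i\theta}B, e^{i\theta}B^*, e^{-i\theta}B^*\}$. If the second-derivative forms satisfy $H^C_{F_r}[s;\xi] \geq 0$, then $H^C_{F_{2-r}}[s;\xi] \geq -2(r-1)(1+\tan\theta_2^*)\,|s|^{-r}\,\|B_s^{1/2}\tilde\xi\|^2$ for every $s \in \mathbb{R}^2\setminus\{0\}$ and $\xi = (\xi_1,\xi_2) \in \mathcal{H}^2$, where $\tilde\xi = \xi_1 + i\xi_2$. -/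

import Mathlib

/-!
The Hessian of `|s|^ρ` is `ρ|s|^(ρ-4)((ρ-2) s sᵀ + |s|² I)`, hence
`Hess F_{2-r} = (2-r)/r · |s|^(2-2r) Hess F_r - 2(r-1)(2-r) |s|^(-r-2) s sᵀ`.
The first term contributes nonnegatively by hypothesis. The rank-one term is
`⟨η, Cr η⟩ + ⟨η, Ci ζ⟩` with `η = s₁ξ₁ + s₂ξ₂`, `ζ = s₂ξ₁ - s₁ξ₂`. Write `C = (cos θ ± i sin θ) A`
with `A ∈ {B, B*}`. The sector bound on `B` and `B_s = S²` give `⟨η, A η⟩ = ‖Sη‖²` and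
`|⟨η, A ζ⟩| ≤ ‖Sη‖‖Sζ‖ + tan θ₂*/2 (‖Sη‖² + ‖Sζ‖²)`, so for every `θ` the rank-one term is at most
`(1 + tan θ₂*)(‖Sη‖² + ‖Sζ‖²) = (1 + tan θ₂*) |s|² (‖Sξ₁‖² + ‖Sξ₂‖²)`.
-/

open Real ContinuousLinearMap
open scoped RealInnerProductSpace

/-- The generalized Hessian form `H^D_Ψ[s;ξ] = ⟨(Hess(Ψ;s)⊗I)ξ, M(D)ξ⟩`, where the
operator `D` on the complexification of `H` has real part `Dr` and imaginary part `Di`,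
and `h` is the Hessian matrix. -/
noncomputable def HForm {H : Type*} [NormedAddCommGroup H] [InnerProductSpace ℝ H]
    (h : Fin 2 → Fin 2 → ℝ) (Dr Di : H →L[ℝ] H) (ξ : Fin 2 → H) : ℝ :=
  ⟪h 0 0 • ξ 0 + h 0 1 • ξ 1, Dr (ξ 0) - Di (ξ 1)⟫ +
    ⟪h 1 0 • ξ 0 + h 1 1 • ξ 1, Di (ξ 0) + Dr (ξ 1)⟫

/-- The Hessian matrix of the power function `F_ρ(s) = |s|^ρ` at `s ∈ ℝ²`. -/
noncomputable def powHess (ρ : ℝ) (s : EuclideanSpace ℝ (Fin 2)) : Fin 2 → Fin 2 → ℝ :=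
  fun i j =>
    fderiv ℝ
      (fun t : EuclideanSpace ℝ (Fin 2) =>
        fderiv ℝ (fun u : EuclideanSpace ℝ (Fin 2) => ‖u‖ ^ ρ) t
          (EuclideanSpace.single i 1))
      s (EuclideanSpace.single j 1)

section NormRpow

variable {E : Type*} [NormedAddCommGroup E] [InnerProductSpace ℝ E]

theorem hasFDerivAt_norm_rpow_of_ne_zero (ρ : ℝ) {x : E} (hx : x ≠ 0) :
    HasFDerivAt (fun u : E => ‖u‖ ^ ρ) ((ρ * ‖x‖ ^ (ρ - 2)) • innerSL ℝ x) x := by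
  have hpos : 0 < ‖x‖ := norm_pos_iff.mpr hx
  have hsq : (fun u : E => ‖u‖ ^ ρ) = fun u => (‖u‖ ^ 2) ^ (ρ / 2) := by
    funext u
    rw [← Real.rpow_natCast, ← Real.rpow_mul (norm_nonneg u)]
    ring_nf
  have hcoef : ρ / 2 * (‖x‖ ^ 2) ^ (ρ / 2 - 1) * 2 = ρ * ‖x‖ ^ (ρ - 2) := by
    rw [← Real.rpow_natCast, ← Real.rpow_mul hpos.le]
    push_cast
    ring_nf
  convert (hasStrictFDerivAt_norm_sq x).hasFDerivAt.rpow_const (p := ρ / 2)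
    (Or.inl (by positivity)) using 1
  rw [← hcoef, mul_smul, two_smul, two_smul]

theorem fderiv_fderiv_norm_rpow_apply (ρ : ℝ) {x : E} (hx : x ≠ 0) (v w : E) :
    fderiv ℝ (fun t => fderiv ℝ (fun u : E => ‖u‖ ^ ρ) t v) x w
      = ρ * ‖x‖ ^ (ρ - 4) * ((ρ - 2) * ⟪x, v⟫ * ⟪x, w⟫ + ‖x‖ ^ 2 * ⟪v, w⟫) := by
  have hpos : 0 < ‖x‖ := norm_pos_iff.mpr hx
  have hgrad : (fun t => fderiv ℝ (fun u : E => ‖u‖ ^ ρ) t v)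
      =ᶠ[nhds x] fun t => ρ * ‖t‖ ^ (ρ - 2) * ⟪t, v⟫ := by
    filter_upwards [isOpen_compl_singleton.mem_nhds hx] with t ht
    simp [(hasFDerivAt_norm_rpow_of_ne_zero ρ ht).fderiv, mul_assoc]
  have hprod := ((hasFDerivAt_norm_rpow_of_ne_zero (ρ - 2) hx).const_mul ρ).mul
    ((innerSL ℝ v).hasFDerivAt (x := x))
  rw [hgrad.fderiv_eq]
  have hrpow : ‖x‖ ^ (ρ - 2) = ‖x‖ ^ (ρ - 4) * ‖x‖ ^ 2 := by
    rw [← Real.rpow_natCast, ← Real.rpow_add hpos]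
    ring_nf
  have hfun : (fun t => ρ * ‖t‖ ^ (ρ - 2) * ⟪t, v⟫)
      = (fun t => ρ * ‖t‖ ^ (ρ - 2)) * ⇑(innerSL ℝ v) := by
    funext t
    simp [real_inner_comm]
  rw [hfun, hprod.fderiv]
  simp [hrpow, real_inner_comm]
  ring_nf

theorem fderiv_fderiv_norm_rpow_two_sub_apply {r : ℝ} (hr : r ≠ 0) {x : E} (hx : x ≠ 0)
    (v w : E) :
    fderiv ℝ (fun t => fderiv ℝ (fun u : E => ‖u‖ ^ (2 - r)) t v) x w
      = (2 - r) / r * ‖x‖ ^ (2 - 2 * r) *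
          fderiv ℝ (fun t => fderiv ℝ (fun u : E => ‖u‖ ^ r) t v) x w
        - 2 * (r - 1) * (2 - r) * ‖x‖ ^ (-r - 2) * (⟪x, v⟫ * ⟪x, w⟫) := by
  have hpos : 0 < ‖x‖ := norm_pos_iff.mpr hx
  have hsplit : ∀ e : ℝ, ‖x‖ ^ (2 - 2 * r + e) = ‖x‖ ^ (2 - 2 * r) * ‖x‖ ^ e :=
    fun e => Real.rpow_add hpos _ _
  rw [fderiv_fderiv_norm_rpow_apply _ hx, fderiv_fderiv_norm_rpow_apply _ hx,
    show 2 - r - 4 = 2 - 2 * r + (r - 4) by ring, show -r - 2 = 2 - 2 * r + (r - 4) by ring,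
    hsplit]
  field_simp
  ring

end NormRpow

theorem powHess_two_sub {r : ℝ} (hr : r ≠ 0) {s : EuclideanSpace ℝ (Fin 2)} (hs : s ≠ 0) :
    powHess (2 - r) s = fun i j => (2 - r) / r * ‖s‖ ^ (2 - 2 * r) * powHess r s i j
      - 2 * (r - 1) * (2 - r) * ‖s‖ ^ (-r - 2) * (s i * s j) := by
  ext i j
  simp only [powHess, fderiv_fderiv_norm_rpow_two_sub_apply hr hs,
    EuclideanSpace.inner_single_right, one_mul, conj_trivial]

theorem mul_sq_add_mul_le {c σ t a b C : ℝ} (ht : 0 ≤ t) (hcσ : c ^ 2 + σ ^ 2 = 1)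
    (hC : |C| ≤ a * b + t / 2 * (a ^ 2 + b ^ 2)) :
    c * a ^ 2 + σ * C ≤ (1 + t) * (a ^ 2 + b ^ 2) := by
  have hc : c ≤ 1 := by nlinarith [sq_nonneg σ, sq_nonneg (c - 1)]
  have hσ : |σ| ≤ 1 := by
    rw [← sq_le_one_iff₀ (abs_nonneg σ), sq_abs]
    nlinarith [sq_nonneg c]
  have hσC : σ * C ≤ |σ| * (a * b + t / 2 * (a ^ 2 + b ^ 2)) :=
    (le_abs_self _).trans ((abs_mul σ C).trans_le
      (mul_le_mul_of_nonneg_left hC (abs_nonneg σ)))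
  -- `σ² = 1 - c²` makes `(1 - c) a² - |σ| a b + b²` positive semidefinite
  have hform : c * a ^ 2 + |σ| * (a * b) ≤ a ^ 2 + b ^ 2 := by
    nlinarith [sq_nonneg (b - |σ| * a / 2), sq_abs σ,
      mul_nonneg (mul_nonneg (sub_nonneg.mpr hc) (by linarith : (0:ℝ) ≤ 3 - c)) (sq_nonneg a)]
  have hrest : |σ| * (t / 2 * (a ^ 2 + b ^ 2)) ≤ t * (a ^ 2 + b ^ 2) := by
    have : 0 ≤ t / 2 * (a ^ 2 + b ^ 2) := by positivity
    nlinarith [abs_nonneg σ]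
  rw [mul_add] at hσC
  linarith

section RealForms

variable {H : Type*} [NormedAddCommGroup H] [InnerProductSpace ℝ H]

theorem HForm_mul_sub_mul (a b : ℝ) (h g : Fin 2 → Fin 2 → ℝ) (Dr Di : H →L[ℝ] H)
    (ξ : Fin 2 → H) :
    HForm (fun i j => a * h i j - b * g i j) Dr Di ξ
      = a * HForm h Dr Di ξ - b * HForm g Dr Di ξ := by
  simp only [HForm, sub_smul, mul_smul, inner_add_left, inner_sub_left, real_inner_smul_left]
  ring

theorem HForm_mul_self (a : Fin 2 → ℝ) (Dr Di : H →L[ℝ] H) (ξ : Fin 2 → H) :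
    HForm (fun i j => a i * a j) Dr Di ξ
      = ⟪a 0 • ξ 0 + a 1 • ξ 1, Dr (a 0 • ξ 0 + a 1 • ξ 1)⟫
        + ⟪a 0 • ξ 0 + a 1 • ξ 1, Di (a 1 • ξ 0 - a 0 • ξ 1)⟫ := by
  simp only [HForm, map_add, map_sub, map_smul, inner_add_left, inner_add_right,
    inner_sub_right, real_inner_smul_left, real_inner_smul_right]
  ring

theorem norm_smul_add_smul_sq_add_norm_smul_sub_smul_sq (a b : ℝ) (u v : H) :
    ‖a • u + b • v‖ ^ 2 + ‖b • u - a • v‖ ^ 2 = (a ^ 2 + b ^ 2) * (‖u‖ ^ 2 + ‖v‖ ^ 2) := by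
  simp only [← real_inner_self_eq_norm_sq, inner_add_left, inner_add_right, inner_sub_left,
    inner_sub_right, real_inner_smul_left, real_inner_smul_right, real_inner_comm u v]
  ring

theorem inner_smul_add_inner_smul_le {A S : H →L[ℝ] H} {t : ℝ} (ht : 0 ≤ t)
    (hdiag : ∀ x, ⟪x, A x⟫ = ‖S x‖ ^ 2)
    (hoff : ∀ x y, |⟪x, A y⟫| ≤ ‖S x‖ * ‖S y‖ + t / 2 * (‖S x‖ ^ 2 + ‖S y‖ ^ 2))
    {c σ : ℝ} (hcσ : c ^ 2 + σ ^ 2 = 1) (η ζ : H) :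
    ⟪η, (c • A) η⟫ + ⟪η, (σ • A) ζ⟫ ≤ (1 + t) * (‖S η‖ ^ 2 + ‖S ζ‖ ^ 2) := by
  simp only [smul_apply, real_inner_smul_right, hdiag]
  exact mul_sq_add_mul_le ht hcσ (hoff η ζ)

theorem HForm_powHess_two_sub_ge {r : ℝ} (hr1 : 1 < r) (hr2 : r < 2)
    {s : EuclideanSpace ℝ (Fin 2)} (hs : s ≠ 0) {Dr Di : H →L[ℝ] H} {ξ : Fin 2 → H}
    (hpos : 0 ≤ HForm (powHess r s) Dr Di ξ) :
    -(2 * (r - 1) * (2 - r) * ‖s‖ ^ (-r - 2)) *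
        (⟪s 0 • ξ 0 + s 1 • ξ 1, Dr (s 0 • ξ 0 + s 1 • ξ 1)⟫
          + ⟪s 0 • ξ 0 + s 1 • ξ 1, Di (s 1 • ξ 0 - s 0 • ξ 1)⟫)
      ≤ HForm (powHess (2 - r) s) Dr Di ξ := by
  rw [powHess_two_sub (by positivity) hs, HForm_mul_sub_mul, HForm_mul_self]
  have hfirst : 0 ≤ (2 - r) / r * ‖s‖ ^ (2 - 2 * r) * HForm (powHess r s) Dr Di ξ :=
    mul_nonneg (mul_nonneg (div_nonneg (by linarith) (by linarith)) (by positivity)) hpos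
  linarith

end RealForms

section SqrtRealPart

variable {H : Type*} [NormedAddCommGroup H] [InnerProductSpace ℝ H] [CompleteSpace H]
  {B S : H →L[ℝ] H}

theorem two_mul_inner_eq_of_sq_eq (hS : IsSelfAdjoint S)
    (hSsq : S ∘L S = (1 / 2 : ℝ) • (B + adjoint B)) (x y : H) :
    2 * ⟪S x, S y⟫ = ⟪B x, y⟫ + ⟪B y, x⟫ := by
  have hSS : S (S x) = (1 / 2 : ℝ) • (B x + adjoint B x) := by
    simpa using congr($hSsq x)
  rw [← adjoint_inner_left, hS.adjoint_eq, hSS, real_inner_smul_left, inner_add_left,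
    adjoint_inner_left, real_inner_comm x (B y)]
  ring

theorem inner_apply_self_eq_norm_sq_of_sq_eq (hS : IsSelfAdjoint S)
    (hSsq : S ∘L S = (1 / 2 : ℝ) • (B + adjoint B)) (x : H) :
    ⟪B x, x⟫ = ‖S x‖ ^ 2 := by
  have := two_mul_inner_eq_of_sq_eq hS hSsq x x
  rw [real_inner_self_eq_norm_sq] at this
  linarith

theorem abs_inner_apply_le_of_sq_eq (hS : IsSelfAdjoint S)
    (hSsq : S ∘L S = (1 / 2 : ℝ) • (B + adjoint B)) {t : ℝ}
    (hB : ∀ x y : H, |⟪B x, y⟫ - ⟪B y, x⟫| ≤ t * (⟪B x, x⟫ + ⟪B y, y⟫)) (x y : H) :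
    |⟪B x, y⟫| ≤ ‖S x‖ * ‖S y‖ + t / 2 * (‖S x‖ ^ 2 + ‖S y‖ ^ 2) := by
  have hsym := two_mul_inner_eq_of_sq_eq hS hSsq x y
  have hskew := hB x y
  rw [inner_apply_self_eq_norm_sq_of_sq_eq hS hSsq,
    inner_apply_self_eq_norm_sq_of_sq_eq hS hSsq] at hskew
  have hCS := abs_real_inner_le_norm (S x) (S y)
  rw [abs_le] at hskew hCS ⊢
  constructor <;> linarith

theorem inner_add_inner_le_of_mem_rotations (hS : IsSelfAdjoint S)
    (hSsq : S ∘L S = (1 / 2 : ℝ) • (B + adjoint B)) {t : ℝ} (ht : 0 ≤ t)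
    (hB : ∀ x y : H, |⟪B x, y⟫ - ⟪B y, x⟫| ≤ t * (⟪B x, x⟫ + ⟪B y, y⟫)) {θ : ℝ}
    {Cr Ci : H →L[ℝ] H}
    (hC : (Cr, Ci) ∈
      ({(cos θ • B, sin θ • B), (cos θ • B, -(sin θ • B)),
        (cos θ • adjoint B, sin θ • adjoint B),
        (cos θ • adjoint B, -(sin θ • adjoint B))} :
          Set ((H →L[ℝ] H) × (H →L[ℝ] H))))
    (η ζ : H) :
    ⟪η, Cr η⟫ + ⟪η, Ci ζ⟫ ≤ (1 + t) * (‖S η‖ ^ 2 + ‖S ζ‖ ^ 2) := by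
  have hdiag : ∀ x, ⟪x, B x⟫ = ‖S x‖ ^ 2 := fun x => by
    rw [real_inner_comm, inner_apply_self_eq_norm_sq_of_sq_eq hS hSsq]
  have hoff : ∀ x y, |⟪x, B y⟫| ≤ ‖S x‖ * ‖S y‖ + t / 2 * (‖S x‖ ^ 2 + ‖S y‖ ^ 2) :=
    fun x y => by
      rw [real_inner_comm, mul_comm ‖S x‖, add_comm (‖S x‖ ^ 2)]
      exact abs_inner_apply_le_of_sq_eq hS hSsq hB y x
  have hdiag' : ∀ x, ⟪x, adjoint B x⟫ = ‖S x‖ ^ 2 := fun x => by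
    rw [adjoint_inner_right, inner_apply_self_eq_norm_sq_of_sq_eq hS hSsq]
  have hoff' : ∀ x y, |⟪x, adjoint B y⟫| ≤ ‖S x‖ * ‖S y‖ + t / 2 * (‖S x‖ ^ 2 + ‖S y‖ ^ 2) :=
    fun x y => by
      rw [adjoint_inner_right]
      exact abs_inner_apply_le_of_sq_eq hS hSsq hB x y
  have hpos : cos θ ^ 2 + sin θ ^ 2 = 1 := cos_sq_add_sin_sq θ
  have hneg : cos θ ^ 2 + (-sin θ) ^ 2 = 1 := by rw [neg_sq, hpos]
  simp only [Set.mem_insert_iff, Set.mem_singleton_iff, Prod.mk.injEq, ← neg_smul] at hC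
  rcases hC with ⟨rfl, rfl⟩ | ⟨rfl, rfl⟩ | ⟨rfl, rfl⟩ | ⟨rfl, rfl⟩
  · exact inner_smul_add_inner_smul_le ht hdiag hoff hpos η ζ
  · exact inner_smul_add_inner_smul_le ht hdiag hoff hneg η ζ
  · exact inner_smul_add_inner_smul_le ht hdiag' hoff' hpos η ζ
  · exact inner_smul_add_inner_smul_le ht hdiag' hoff' hneg η ζ

end SqrtRealPart

theorem stmt_19_general {H : Type*} [NormedAddCommGroup H] [InnerProductSpace ℝ H] [CompleteSpace H]
    (B S : H →L[ℝ] H)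
    -- `θ2s` is the smallest angle bounding the numerical range of the
    -- complexification of `B`: for `ξ̃ = ξ₁ + iξ₂` one has
    -- `Re⟨Bξ̃,ξ̃⟩ = ⟨Bξ₁,ξ₁⟩ + ⟨Bξ₂,ξ₂⟩` and `|Im⟨Bξ̃,ξ̃⟩| = |⟨Bξ₁,ξ₂⟩ - ⟨Bξ₂,ξ₁⟩|`
    (θ2s : ℝ) (hθmem : θ2s ∈ Set.Ico 0 (π/2))
    (hθ2 : ∀ ξ₁ ξ₂ : H, |⟪B ξ₁, ξ₂⟫ - ⟪B ξ₂, ξ₁⟫| ≤ tan θ2s * (⟪B ξ₁, ξ₁⟫ + ⟪B ξ₂, ξ₂⟫))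
    -- `S` is the positive square root of `B_s = (B+B^*)/2`
    (hSsa : IsSelfAdjoint S)
    (hSsq : S ∘L S = (1/2 : ℝ) • (B + adjoint B))
    (r : ℝ) (hr1 : 1 < r) (hr2 : r < 2)
    (θ : ℝ)
    -- `C ∈ {e^{iθ}B, e^{-iθ}B, e^{iθ}B^*, e^{-iθ}B^*}`, described by its
    -- real part `Cr` and imaginary part `Ci`
    (Cr Ci : H →L[ℝ] H)
    (hC : (Cr, Ci) ∈
      ({(cos θ • B, sin θ • B), (cos θ • B, -(sin θ • B)),
        (cos θ • adjoint B, sin θ • adjoint B),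
        (cos θ • adjoint B, -(sin θ • adjoint B))} :
          Set ((H →L[ℝ] H) × (H →L[ℝ] H))))
    (s : EuclideanSpace ℝ (Fin 2)) (hs : s ≠ 0) (ξ : Fin 2 → H)
    (hpos : 0 ≤ HForm (powHess r s) Cr Ci ξ) :
    -2 * (r - 1) * (1 + tan θ2s) * ‖s‖ ^ (-r) * (‖S (ξ 0)‖^2 + ‖S (ξ 1)‖^2)
      ≤ HForm (powHess (2 - r) s) Cr Ci ξ := by
  have ht : 0 ≤ tan θ2s := tan_nonneg_of_nonneg_of_le_pi_div_two hθmem.1 hθmem.2.le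
  have hs0 : 0 < ‖s‖ := norm_pos_iff.mpr hs
  set η := s 0 • ξ 0 + s 1 • ξ 1
  set ζ := s 1 • ξ 0 - s 0 • ξ 1
  set N := ‖S (ξ 0)‖ ^ 2 + ‖S (ξ 1)‖ ^ 2
  have hrank : ⟪η, Cr η⟫ + ⟪η, Ci ζ⟫ ≤ (1 + tan θ2s) * (‖s‖ ^ 2 * N) := by
    have hSηζ : ‖S η‖ ^ 2 + ‖S ζ‖ ^ 2 = ‖s‖ ^ 2 * N := by
      simp only [η, ζ, N, map_add, map_sub, map_smul,
        norm_smul_add_smul_sq_add_norm_smul_sub_smul_sq, EuclideanSpace.real_norm_sq_eq,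
        Fin.sum_univ_two]
    rw [← hSηζ]
    exact inner_add_inner_le_of_mem_rotations hSsa hSsq ht hθ2 hC η ζ
  have hpow : ‖s‖ ^ (-r - 2) * ‖s‖ ^ 2 = ‖s‖ ^ (-r) := by
    rw [← Real.rpow_natCast, ← Real.rpow_add hs0]
    norm_num
  have hK : 0 ≤ (1 + tan θ2s) * ‖s‖ ^ (-r) * N := by positivity
  have hcoef : 0 ≤ 2 * (r - 1) * (2 - r) * ‖s‖ ^ (-r - 2) :=
    mul_nonneg (mul_nonneg (by linarith) (by linarith)) (by positivity)
  calc -2 * (r - 1) * (1 + tan θ2s) * ‖s‖ ^ (-r) * N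
      ≤ -(2 * (r - 1) * (2 - r)) * ((1 + tan θ2s) * ‖s‖ ^ (-r) * N) := by
        nlinarith [mul_nonneg (by linarith : (0:ℝ) ≤ r - 1) hK]
    _ = -(2 * (r - 1) * (2 - r) * ‖s‖ ^ (-r - 2)) * ((1 + tan θ2s) * (‖s‖ ^ 2 * N)) := by
        rw [← hpow]; ring
    _ ≤ -(2 * (r - 1) * (2 - r) * ‖s‖ ^ (-r - 2)) * (⟪η, Cr η⟫ + ⟪η, Ci ζ⟫) :=
        mul_le_mul_of_nonpos_left hrank (neg_nonpos.mpr hcoef)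
    _ ≤ HForm (powHess (2 - r) s) Cr Ci ξ := HForm_powHess_two_sub_ge hr1 hr2 hs hpos

theorem stmt_19 {H : Type*} [NormedAddCommGroup H] [InnerProductSpace ℝ H] [CompleteSpace H]
    (B S : H →L[ℝ] H) (lam : ℝ) (hlam : 0 < lam)
    (hacc : ∀ ξ : H, lam * ‖ξ‖^2 ≤ ⟪B ξ, ξ⟫)
    -- `θ2s` is the smallest angle bounding the numerical range of the
    -- complexification of `B`: for `ξ̃ = ξ₁ + iξ₂` one has
    -- `Re⟨Bξ̃,ξ̃⟩ = ⟨Bξ₁,ξ₁⟩ + ⟨Bξ₂,ξ₂⟩` and `|Im⟨Bξ̃,ξ̃⟩| = |⟨Bξ₁,ξ₂⟩ - ⟨Bξ₂,ξ₁⟩|`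
    (θ2s : ℝ) (hθmem : θ2s ∈ Set.Ico 0 (π/2))
    (hθ2 : ∀ ξ₁ ξ₂ : H, |⟪B ξ₁, ξ₂⟫ - ⟪B ξ₂, ξ₁⟫| ≤ tan θ2s * (⟪B ξ₁, ξ₁⟫ + ⟪B ξ₂, ξ₂⟫))
    (hmin : ∀ θ' ∈ Set.Ico (0:ℝ) (π/2),
      (∀ ξ₁ ξ₂ : H, |⟪B ξ₁, ξ₂⟫ - ⟪B ξ₂, ξ₁⟫| ≤ tan θ' * (⟪B ξ₁, ξ₁⟫ + ⟪B ξ₂, ξ₂⟫))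
        → θ2s ≤ θ')
    -- `S` is the positive square root of `B_s = (B+B^*)/2`
    (hSsa : IsSelfAdjoint S) (hSpos : ∀ ξ : H, 0 ≤ ⟪S ξ, ξ⟫)
    (hSsq : S ∘L S = (1/2 : ℝ) • (B + adjoint B))
    (r : ℝ) (hr1 : 1 < r) (hr2 : r < 2)
    (θ : ℝ) (hθ0 : 0 ≤ θ)
    (hθr : θ ≤ π/2 - arctan (Real.sqrt ((r-2)^2 + r^2 * (tan θ2s)^2) / (2 * Real.sqrt (r-1))))
    -- `C ∈ {e^{iθ}B, e^{-iθ}B, e^{iθ}B^*, e^{-iθ}B^*}`, described by its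
    -- real part `Cr` and imaginary part `Ci`
    (Cr Ci : H →L[ℝ] H)
    (hC : (Cr, Ci) ∈
      ({(cos θ • B, sin θ • B), (cos θ • B, -(sin θ • B)),
        (cos θ • adjoint B, sin θ • adjoint B),
        (cos θ • adjoint B, -(sin θ • adjoint B))} :
          Set ((H →L[ℝ] H) × (H →L[ℝ] H))))
    (s : EuclideanSpace ℝ (Fin 2)) (hs : s ≠ 0) (ξ : Fin 2 → H)
    (hpos : 0 ≤ HForm (powHess r s) Cr Ci ξ) :
    -2 * (r - 1) * (1 + tan θ2s) * ‖s‖ ^ (-r) * (‖S (ξ 0)‖^2 + ‖S (ξ 1)‖^2)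
      ≤ HForm (powHess (2 - r) s) Cr Ci ξ :=
  stmt_19_general B S θ2s hθmem hθ2 hSsa hSsq r hr1 hr2 θ Cr Ci hC s hs ξ hpos
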